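/- Let n, m, r be natural numbers and μ, λ reals with 1 − 2μλ ≥ 0. Let (W_s)_{s∈ℕ} and (G_s)_{s∈ℕ} be sequences of n×m real matrices satisfying W_{s+1} = (1 − 2μλ)·W_s − μ·G_s for all s, and rank(G_s) ≤ r for all s. Then for every t ∈ ℕ and every k ≤ t there exists an n×m real matrix M with rank(M) ≤ r·k and ‖W_t − M‖_F ≤ (1 − 2μλ)^k · ‖W_{t−k}‖_F. -/

import Mathlib

noncomputable def frobNorm {n m : ℕ} (A : Matrix (Fin n) (Fin m) ℝ) : ℝ :=
  Real.sqrt (∑ i, ∑ j, (A i j) ^ 2)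

theorem frobNorm_smul {n m : ℕ} (c : ℝ) (A : Matrix (Fin n) (Fin m) ℝ) :
    frobNorm (c • A) = |c| * frobNorm A := by
  have hsum : ∑ i, ∑ j, ((c • A) i j) ^ 2 = c ^ 2 * ∑ i, ∑ j, (A i j) ^ 2 := by
    simp only [Matrix.smul_apply, smul_eq_mul, mul_pow, Finset.mul_sum]
  rw [frobNorm, hsum, Real.sqrt_mul (sq_nonneg c), Real.sqrt_sq_eq_abs, frobNorm]

namespace Matrix

variable {ι κ K : Type*} [Fintype κ] [Field K]

theorem rank_smul_le (c : K) (A : Matrix ι κ K) : (c • A).rank ≤ A.rank := by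
  apply Submodule.finrank_mono
  rintro _ ⟨v, rfl⟩
  exact ⟨c • v, by simp⟩

theorem rank_add_le (A B : Matrix ι κ K) : (A + B).rank ≤ A.rank + B.rank := by
  have hrange : LinearMap.range (A + B).mulVecLin ≤
      LinearMap.range A.mulVecLin ⊔ LinearMap.range B.mulVecLin := by
    rintro _ ⟨v, rfl⟩
    rw [mulVecLin_apply, add_mulVec]
    exact Submodule.add_mem_sup ⟨v, rfl⟩ ⟨v, rfl⟩
  exact (Submodule.finrank_mono hrange).trans (Submodule.finrank_add_le_finrank_add_finrank _ _)

/-- Unrolling `W (s + 1) = c • W s + D s` over `k` steps leaves `c ^ k • W s` plus a sum of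
`k` matrices of the form `c ^ j • D _`. -/
theorem exists_rank_le_and_eq_pow_smul_add {r : ℕ} (c : K) (W D : ℕ → Matrix ι κ K)
    (hW : ∀ s, W (s + 1) = c • W s + D s) (hD : ∀ s, (D s).rank ≤ r) (s k : ℕ) :
    ∃ M : Matrix ι κ K, M.rank ≤ r * k ∧ W (s + k) = c ^ k • W s + M := by
  induction k with
  | zero => exact ⟨0, by simp, by simp⟩
  | succ k ih =>
    obtain ⟨M, hM, hWM⟩ := ih
    refine ⟨c • M + D (s + k), ?_, ?_⟩
    · calc (c • M + D (s + k)).rank ≤ M.rank + (D (s + k)).rank :=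
            (rank_add_le _ _).trans (Nat.add_le_add_right (rank_smul_le _ _) _)
        _ ≤ r * (k + 1) := by rw [Nat.mul_succ]; exact Nat.add_le_add hM (hD _)
    · rw [← add_assoc, hW, hWM, smul_add, smul_smul, pow_succ', add_assoc]

end Matrix

/-- For the SGD-with-weight-decay recursion `W_{s+1} = (1−2μλ)·W_s − μ·G_s`
with `rank(G_s) ≤ r` and `1 − 2μλ ≥ 0`, for every `t` and `k ≤ t` there is a matrix `M`
with `rank(M) ≤ r·k` and `‖W_t − M‖_F ≤ (1−2μλ)^k · ‖W_{t−k}‖_F`. -/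
theorem stmt1 {n m r : ℕ} (μ lam : ℝ) (hμlam : 1 - 2 * μ * lam ≥ 0)
    (W G : ℕ → Matrix (Fin n) (Fin m) ℝ)
    (hW : ∀ s, W (s + 1) = (1 - 2 * μ * lam) • W s - μ • G s)
    (hG : ∀ s, (G s).rank ≤ r) :
    ∀ t k : ℕ, k ≤ t →
      ∃ M : Matrix (Fin n) (Fin m) ℝ, M.rank ≤ r * k ∧
        frobNorm (W t - M) ≤ (1 - 2 * μ * lam) ^ k * frobNorm (W (t - k)) := by
  intro t k hkt
  obtain ⟨M, hM, hWM⟩ := Matrix.exists_rank_le_and_eq_pow_smul_add (1 - 2 * μ * lam) W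
    (fun s => -μ • G s) (fun s => by rw [hW, sub_eq_add_neg, neg_smul])
    (fun s => (Matrix.rank_smul_le _ _).trans (hG s)) (t - k) k
  refine ⟨M, hM, le_of_eq ?_⟩
  rw [Nat.sub_add_cancel hkt] at hWM
  rw [hWM, add_sub_cancel_right, frobNorm_smul, abs_pow, abs_of_nonneg hμlam]
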